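/- arXiv:1306.5525 — 2 statements merged into one kernel-verified Lean document; each statement's English description precedes it below -/
import Mathlib

section
/- Let R be a squarefree positive integer with at least two prime factors, let c be a positive integer coprime to 2R, set a = 2 + 4cR and D = a² - 4 = 16cR(1 + cR). Write D = m²Δ with Δ squarefree. Then every prime p dividing R is ramified in K = ℚ(√D), i.e., p divides disc(K). -/
/-- Let `R` be a squarefree positive integer with at least two prime factors, `c > 0`
coprime to `2R`, `a = 2 + 4cR`, `D = a² - 4 = 16cR(1+cR)`, and write `D = m²Δ` with `Δ`
squarefree. Then every prime `p ∣ R` divides the discriminant of `K = ℚ(√D)`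
(which is `Δ` if `Δ ≡ 1 mod 4` and `4Δ` otherwise), i.e. `p` is ramified in `K`. -/
theorem primes_of_radical_ramified (R c a D m Δ : ℤ)
    (hR : 0 < R) (hRsf : Squarefree R)
    (hRprimes : ∃ p q : ℕ, p.Prime ∧ q.Prime ∧ p ≠ q ∧ (p : ℤ) ∣ R ∧ (q : ℤ) ∣ R)
    (hc : 0 < c) (hcop : IsCoprime c (2 * R))
    (ha : a = 2 + 4 * c * R) (hD : D = a ^ 2 - 4) (hm : D = m ^ 2 * Δ)
    (hΔ : Squarefree Δ) :
    ∀ p : ℤ, Prime p → p ∣ R → p ∣ (if Δ % 4 = 1 then Δ else 4 * Δ) := by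
  intro p hp hpR
  suffices hpΔ : p ∣ Δ by
    split
    · exact hpΔ
    · exact hpΔ.mul_left 4
  have hqp : p.natAbs.Prime := Int.prime_iff_natAbs_prime.mp hp
  set q := p.natAbs with hqdef
  have hD16 : D = 16 * (c * (R * (1 + c * R))) := by rw [hD, ha]; ring
  have hcR : 0 < 1 + c * R := by positivity
  have hDpos : 0 < D := by
    rw [hD16]
    have := mul_pos hc (mul_pos hR hcR)
    linarith
  have hΔne : Δ ≠ 0 := hΔ.ne_zero
  have hmne : m ≠ 0 := by
    rintro rfl
    simp at hm
    omega
  -- nonzero natAbs's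
  have hCn : c.natAbs ≠ 0 := by simp [Int.natAbs_ne_zero]; omega
  have hRn : R.natAbs ≠ 0 := by simp [Int.natAbs_ne_zero]; omega
  have hSn : (1 + c * R).natAbs ≠ 0 := by simp [Int.natAbs_ne_zero]; omega
  have hΔn : Δ.natAbs ≠ 0 := by simpa [Int.natAbs_ne_zero] using hΔne
  have hmn : m.natAbs ≠ 0 := by simpa [Int.natAbs_ne_zero] using hmne
  -- q does not divide c
  have hpc : ¬ q ∣ c.natAbs := by
    intro h
    have hpc' : p ∣ c := Int.natAbs_dvd_natAbs.mp h
    exact hp.not_unit (hcop.isUnit_of_dvd' hpc' (hpR.mul_left 2))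
  -- q does not divide 1 + c*R
  have hpS : ¬ q ∣ (1 + c * R).natAbs := by
    intro h
    have h1 : p ∣ 1 + c * R := Int.natAbs_dvd_natAbs.mp h
    have h2 : p ∣ c * R := hpR.mul_left c
    have h3 : p ∣ 1 := by
      have := dvd_sub h1 h2
      simpa using this
    exact hp.not_unit (isUnit_of_dvd_one h3)
  -- two expressions for D.natAbs
  have hDn1 : D.natAbs = 16 * (c.natAbs * (R.natAbs * (1 + c * R).natAbs)) := by
    rw [hD16, Int.natAbs_mul, Int.natAbs_mul, Int.natAbs_mul]
    rfl
  have hDn2 : D.natAbs = m.natAbs ^ 2 * Δ.natAbs := by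
    rw [hm, Int.natAbs_mul, Int.natAbs_pow]
  -- factorization of D at q, first form
  have h16 : (16 : ℕ).factorization q = 2 * (4 : ℕ).factorization q := by
    have h : (16 : ℕ) = 4 ^ 2 := by norm_num
    rw [h, Nat.factorization_pow]
    simp
  have hfC : c.natAbs.factorization q = 0 := Nat.factorization_eq_zero_of_not_dvd hpc
  have hfS : (1 + c * R).natAbs.factorization q = 0 :=
    Nat.factorization_eq_zero_of_not_dvd hpS
  have hfR : R.natAbs.factorization q = 1 := by
    have hsf : Squarefree R.natAbs := Int.squarefree_natAbs.mpr hRsf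
    have hle := hsf.natFactorization_le_one (n := R.natAbs) q
    have hpos := hqp.factorization_pos_of_dvd hRn (Int.natAbs_dvd_natAbs.mpr hpR)
    omega
  have key1 : D.natAbs.factorization q =
      (16 : ℕ).factorization q + 1 := by
    rw [hDn1, Nat.factorization_mul (by norm_num) (mul_ne_zero hCn (mul_ne_zero hRn hSn)),
      Nat.factorization_mul hCn (mul_ne_zero hRn hSn),
      Nat.factorization_mul hRn hSn]
    simp [hfC, hfS, hfR]
  have key2 : D.natAbs.factorization q =
      2 * m.natAbs.factorization q + Δ.natAbs.factorization q := by
    rw [hDn2, Nat.factorization_mul (pow_ne_zero 2 hmn) hΔn, Nat.factorization_pow]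
    simp [mul_comm]
  have hΔle : Δ.natAbs.factorization q ≤ 1 :=
    (Int.squarefree_natAbs.mpr hΔ).natFactorization_le_one q
  have hΔpos : Δ.natAbs.factorization q ≠ 0 := by omega
  have : q ∣ Δ.natAbs := Nat.dvd_of_factorization_pos hΔpos
  exact Int.natAbs_dvd_natAbs.mp this
end

section
/- Let Ẽ be the finite set of oriented edges of a graph, with the involution k ↦ k̄ (reversal of orientation) without fixed points, and let each oriented edge k have a length l(k). Let T_s be the |Ẽ|×|Ẽ| matrix over ℂ indexed by oriented edges with (T_s)_{k',k} = e^{-s·l(k')} if the source of k' equals the target of k and k' ≠ k̄, and 0 otherwise. Then for every n ≥ 1, tr(T_s^n) = Σ_{c : L(c)=n} e^{-s·l(c)} · L(c₀), where the sum is over closed geodesics (non-backtracking closed paths up to rotation) of combinatorial length n, l(c) is the total metric length, and c₀ is the primitive geodesic underlying c. -/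
private lemma pow_succ_apply_aux {V : Type*} [Fintype V] [DecidableEq V]
    (M : Matrix V V ℂ) :
    ∀ (n : ℕ) (a b : V), (M ^ (n + 1)) a b =
      ∑ f : Fin n → V, ∏ i : Fin (n + 1),
        M ((Fin.snoc f a : Fin (n + 1) → V) i) ((Fin.cons b f : Fin (n + 1) → V) i) := by
  intro n
  induction n with
  | zero =>
      intro a b
      rw [pow_one, Finset.univ_unique, Finset.sum_singleton]
      rw [show (Finset.univ : Finset (Fin (0 + 1))) = {0} from rfl, Finset.prod_singleton]
      rw [show ((0 : Fin (0 + 1))) = Fin.last 0 from rfl, Fin.snoc_last]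
      rfl
  | succ n ih =>
      intro a b
      rw [pow_succ, Matrix.mul_apply]
      have h1 : ∀ c, (M ^ (n + 1)) a c * M c b =
          ∑ f : Fin n → V, M c b * ∏ i : Fin (n + 1),
            M ((Fin.snoc f a : Fin (n + 1) → V) i) ((Fin.cons c f : Fin (n + 1) → V) i) := by
        intro c
        rw [ih a c, Finset.sum_mul]
        exact Finset.sum_congr rfl fun f _ => mul_comm _ _
      simp_rw [h1]
      rw [← Fintype.sum_equiv (Fin.consEquiv fun _ : Fin (n + 1) => V)
        (fun cf : V × (Fin n → V) => M cf.1 b * ∏ i : Fin (n + 1),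
          M ((Fin.snoc cf.2 a : Fin (n + 1) → V) i) ((Fin.cons cf.1 cf.2 : Fin (n + 1) → V) i))
        (fun f' : Fin (n + 1) → V => ∏ i : Fin (n + 2),
          M ((Fin.snoc f' a : Fin (n + 2) → V) i) ((Fin.cons b f' : Fin (n + 2) → V) i))
        ?_]
      · rw [Fintype.sum_prod_type]
      · rintro ⟨c, f⟩
        show M c b * ∏ i : Fin (n + 1),
            M ((Fin.snoc f a : Fin (n + 1) → V) i) ((Fin.cons c f : Fin (n + 1) → V) i)
          = ∏ i : Fin (n + 2), M ((Fin.snoc (Fin.cons c f) a : Fin (n + 2) → V) i)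
              ((Fin.cons b (Fin.cons c f) : Fin (n + 2) → V) i)
        rw [← Fin.cons_snoc_eq_snoc_cons]
        conv_rhs => rw [Fin.prod_univ_succ]
        simp

private lemma trace_pow_aux {V : Type*} [Fintype V] [DecidableEq V]
    (M : Matrix V V ℂ) (n : ℕ) :
    Matrix.trace (M ^ (n + 1)) =
      ∑ p : Fin (n + 1) → V, ∏ i : Fin (n + 1),
        M (p (finRotate (n + 1) i)) (p i) := by
  rw [Matrix.trace]
  simp_rw [Matrix.diag_apply, pow_succ_apply_aux M n]
  rw [← Fintype.sum_equiv (Fin.snocEquiv fun _ : Fin (n + 1) => V)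
    (fun af : V × (Fin n → V) => ∏ i : Fin (n + 1),
      M ((Fin.snoc af.2 af.1 : Fin (n + 1) → V) i) ((Fin.cons af.1 af.2 : Fin (n + 1) → V) i))
    (fun p : Fin (n + 1) → V => ∏ i : Fin (n + 1), M (p (finRotate (n + 1) i)) (p i))
    ?_]
  · rw [Fintype.sum_prod_type]
  · rintro ⟨a, f⟩
    show ∏ i : Fin (n + 1),
        M ((Fin.snoc f a : Fin (n + 1) → V) i) ((Fin.cons a f : Fin (n + 1) → V) i)
      = ∏ i : Fin (n + 1),
        M ((Fin.snoc f a : Fin (n + 1) → V) (finRotate (n + 1) i))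
          ((Fin.snoc f a : Fin (n + 1) → V) i)
    have key : ∀ j : Fin (n + 1),
        (Fin.snoc f a : Fin (n + 1) → V) j
          = (Fin.cons a f : Fin (n + 1) → V) (finRotate (n + 1) j) := by
      intro j
      induction j using Fin.lastCases with
      | last => simp [finRotate_last]
      | cast k =>
          rw [Fin.snoc_castSucc, finRotate_succ_apply, Fin.coeSucc_eq_succ, Fin.cons_succ]
    refine Fintype.prod_equiv (finRotate (n + 1)).symm
      (fun i => M ((Fin.snoc f a : Fin (n + 1) → V) i) ((Fin.cons a f : Fin (n + 1) → V) i))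
      (fun j => M ((Fin.snoc f a : Fin (n + 1) → V) (finRotate (n + 1) j))
        ((Fin.snoc f a : Fin (n + 1) → V) j)) fun i => ?_
    have h2 := key ((finRotate (n + 1)).symm i)
    rw [Equiv.apply_symm_apply] at h2
    simp only [Equiv.apply_symm_apply, h2]

/-- Trace formula for the edge-transfer operator of a finite metric graph:
`V` is the finite set of oriented edges with fixed-point-free opposite-edge involution
`inv`, source and target maps `src, tgt` into the vertex set `W`, and edge lengths `l`.
For the matrix `(T_s)_{k',k} = e^{-s·l(k')}` (when `src k' = tgt k` and `k' ≠ inv k`,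
else `0`) and every `n ≥ 1`, the trace of `T_s ^ n` equals the sum over all closed
non-backtracking edge paths of combinatorial length `n` (equivalently, the sum over
closed geodesics `c` of combinatorial length `n` of `e^{-s·l(c)} · L(c₀)`, since each
rotation class `c` with underlying primitive geodesic `c₀` contains exactly `L(c₀)`
based paths) of `e^{-s·l(path)}`. -/
theorem trace_transfer_operator_eq_sum_closed_paths
    {V W : Type*} [Fintype V] [DecidableEq V] [DecidableEq W]
    (inv : V → V) (hinv : Function.Involutive inv) (hfix : ∀ k, inv k ≠ k)
    (src tgt : V → W) (hst : ∀ k, src (inv k) = tgt k)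
    (l : V → ℝ) (hl : ∀ k, 0 < l k) (hlinv : ∀ k, l (inv k) = l k)
    (s : ℂ) (n : ℕ) (hn : 1 ≤ n)
    (T : Matrix V V ℂ)
    (hT : ∀ k' k, T k' k =
      if src k' = tgt k ∧ k' ≠ inv k then Complex.exp (-s * l k') else 0) :
    Matrix.trace (T ^ n) =
      ∑ p ∈ Finset.univ.filter (fun p : Fin n → V =>
          ∀ i : Fin n, src (p (finRotate n i)) = tgt (p i) ∧ p (finRotate n i) ≠ inv (p i)),
        Complex.exp (-s * ((∑ i, l (p i) : ℝ) : ℂ)) := by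
  obtain ⟨m, rfl⟩ : ∃ m, n = m + 1 := ⟨n - 1, (Nat.succ_pred_eq_of_pos hn).symm⟩
  rw [trace_pow_aux T m, Finset.sum_filter]
  refine Finset.sum_congr rfl fun p _ => ?_
  by_cases h : ∀ i : Fin (m + 1),
      src (p (finRotate (m + 1) i)) = tgt (p i) ∧ p (finRotate (m + 1) i) ≠ inv (p i)
  · rw [if_pos h]
    have he : ∀ i : Fin (m + 1), T (p (finRotate (m + 1) i)) (p i)
        = Complex.exp (-s * l (p (finRotate (m + 1) i))) := fun i => by
      rw [hT, if_pos (h i)]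
    rw [Finset.prod_congr rfl fun i _ => he i, ← Complex.exp_sum]
    congr 1
    rw [← Finset.mul_sum]
    congr 1
    push_cast
    exact Equiv.sum_comp (finRotate (m + 1)) (fun i => (l (p i) : ℂ))
  · rw [if_neg h]
    push_neg at h
    obtain ⟨i, hi⟩ := h
    refine Finset.prod_eq_zero (Finset.mem_univ i) ?_
    rw [hT, if_neg]
    rintro ⟨hc1, hc2⟩
    exact hc2 (hi hc1)
end
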